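/- arXiv:1605.03472 — 2 statements merged into one kernel-verified Lean document; each statement's English description precedes it below -/
import Mathlib

section
/- Let A ∈ V[∂] be a hereditary differential operator of degree N, written A = Σ_{k=0}^N a_k ∂^k. Then the differential order of each coefficient a_k is at most N + 1. -/
/-- An algebra of differential functions in one variable `u`:
a commutative `ℂ`-algebra with partial derivatives `∂/∂u⁽ⁿ⁾`, a derivation `∂/∂x`,
distinguished elements `u⁽ⁿ⁾`, and the total derivative `∂`. -/
structure DiffAlg (V : Type) [CommRing V] [Algebra ℂ V] where
  pd : ℕ → Derivation ℂ V V
  dx : Derivation ℂ V V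
  u : ℕ → V
  total : Derivation ℂ V V
  pd_comm : ∀ m n f, pd m (pd n f) = pd n (pd m f)
  pd_dx : ∀ n f, pd n (dx f) = dx (pd n f)
  pd_u : ∀ m n, pd m (u n) = if m = n then 1 else 0
  dx_u : ∀ n, dx (u n) = 0
  pdFin : ∀ f, Set.Finite {n | pd n f ≠ 0}
  total_eq : ∀ f, total f = (∑ᶠ n, u (n + 1) * pd n f) + dx f

namespace DiffAlg

variable {V : Type} [CommRing V] [Algebra ℂ V]

/-- The evolutionary vector field `X_F` applied to `f`. -/
noncomputable def evf (A : DiffAlg V) (F f : V) : V :=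
  ∑ᶠ n, (fun x => A.total x)^[n] F * A.pd n f

end DiffAlg

/-- Generalized binomial coefficient `C(k, n)` for `k : ℤ`. -/
def intChoose (k : ℤ) (n : ℕ) : ℤ :=
  (∏ i ∈ Finset.range n, (k - (i : ℤ))) / (n.factorial : ℤ)

namespace DiffAlg

variable {V : Type} [CommRing V] [Algebra ℂ V]

/-- Product of two pseudodifferential operators given by their coefficient functions
(`a m` is the coefficient of `∂^m`), using `∂^k ∘ a = Σ_n C(k,n) a⁽ⁿ⁾ ∂^{k-n}`. -/
noncomputable def mulZ (A : DiffAlg V) (a b : ℤ → V) : ℤ → V := fun m =>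
  ∑ᶠ (k : ℤ), ∑ᶠ (n : ℕ), intChoose k n • (a k * (fun x => A.total x)^[n] (b (m - k + n)))

/-- The Fréchet derivative `D_F` as a pseudodifferential operator. -/
noncomputable def DFz (A : DiffAlg V) (F : V) : ℤ → V := fun m =>
  if 0 ≤ m then A.pd m.toNat F else 0

/-- The Lie derivative `𝓛_F(L) = X_F(L) - [D_F, L]` of a pseudodifferential operator. -/
noncomputable def lieD (A : DiffAlg V) (F : V) (L : ℤ → V) : ℤ → V := fun m =>
  evf A F (L m) - (mulZ A (DFz A F) L m - mulZ A L (DFz A F) m)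

/-- The identity pseudodifferential operator. -/
def onePS : ℤ → V := fun m => if m = 0 then 1 else 0

/-- `L` has degree `N` (as a pseudodifferential operator). -/
def hasDeg (c : ℤ → V) (N : ℤ) : Prop := c N ≠ 0 ∧ ∀ m : ℤ, N < m → c m = 0

/-- Embedding of a differential operator (coefficients indexed by `ℕ`) as a
pseudodifferential operator. -/
def loc (a : ℕ → V) : ℤ → V := fun m => if 0 ≤ m then a m.toNat else 0

end DiffAlg

namespace DiffAlg

variable {V : Type} [CommRing V] [Algebra ℂ V]

/-- Application of the differential operator with coefficients `a` to an element. -/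
noncomputable def opApp (A : DiffAlg V) (a : ℕ → V) (f : V) : V :=
  ∑ᶠ k, a k * (fun x => A.total x)^[k] f

/-- The coefficients of the differential operator `(D_A)_F = Σ_k F⁽ᵏ⁾ D_{a_k}`. -/
noncomputable def dafC (A : DiffAlg V) (a : ℕ → V) (F : V) : ℕ → V := fun j =>
  ∑ᶠ k, (fun x => A.total x)^[k] F * A.pd j (a k)

/-- `A` (with coefficients `a`) is hereditary:
`X_{A(F)}(A) - [(D_A)_F, A] = A ∘ (X_F(A))` for all `F`, as pseudodifferential
operators (coefficientwise). -/
noncomputable def IsHereditary (A : DiffAlg V) (a : ℕ → V) : Prop :=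
  ∀ F : V, ∀ m : ℤ,
    loc (fun j => evf A (opApp A a F) (a j)) m
      - (mulZ A (loc (dafC A a F)) (loc a) m - mulZ A (loc a) (loc (dafC A a F)) m)
    = mulZ A (loc a) (loc (fun j => evf A F (a j))) m

end DiffAlg

/-!
Let `m` be the largest differential order of the coefficients and suppose `m > N + 1`. In the
hereditary identity the coefficient of `∂^(N+m-1)` only sees the commutator, which gives
`m b a_N' = N a_N b'` for the top coefficient `b` of `(D_A)_F`. For `F = u⁽ᴾ⁾` with `P > m` we get
`b = Σ_k u⁽ᴾ⁺ᵏ⁾ ∂a_k/∂u⁽ᵐ⁾`, so differentiating in `u⁽ᴾ⁺ʲ⁺¹⁾` by means of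
`[∂/∂u⁽q⁺¹⁾, ∂] = ∂/∂u⁽q⁾`, where `j` is the last index with `∂a_j/∂u⁽ᵐ⁾ ≠ 0`, leaves `N a_N ∂a_j/∂u⁽ᵐ⁾ = 0`, i.e. `N = 0`. Then `m b a_0' = 0`, although
`b ≠ 0` and `∂a_0' / ∂u⁽ᵐ⁺¹⁾ = ∂a_0/∂u⁽ᵐ⁾ ≠ 0`.
-/

theorem exists_ne_zero_and_succ_eq_zero {M : Type*} [Zero M] {c : ℕ → M} {k N : ℕ} (hk : c k ≠ 0)
    (hN : ∀ i, N < i → c i = 0) : ∃ j, c j ≠ 0 ∧ c (j + 1) = 0 := by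
  by_contra! h
  have hck : ∀ i, c (k + i) ≠ 0 := fun i => by
    induction i with
    | zero => exact hk
    | succ i ih => exact h _ ih
  exact hck (N + 1) (hN _ (by omega))

namespace DiffAlg

theorem loc_natCast {V : Type} [CommRing V] (f : ℕ → V) (n : ℕ) : loc f n = f n := by
  simp [loc]

theorem loc_eq_zero {V : Type} [CommRing V] {f : ℕ → V} {n : ℕ} (hf : ∀ k, n < k → f k = 0)
    {j : ℤ} (hj : n < j) : loc f j = 0 := by
  rw [loc, if_pos (by omega), hf _ (by omega)]

variable {V : Type} [CommRing V] [Algebra ℂ V] (A : DiffAlg V)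

def OrderLE (m : ℕ) (f : V) : Prop := ∀ q, m < q → A.pd q f = 0

variable {A}

theorem OrderLE.mono {m n : ℕ} {f : V} (hf : A.OrderLE m f) (hmn : m ≤ n) : A.OrderLE n f :=
  fun q hq => hf q (by omega)

theorem orderLE_zero (m : ℕ) : A.OrderLE m (0 : V) :=
  fun q _ => map_zero (A.pd q)

variable (A)

theorem exists_orderLE (f : V) : ∃ m, A.OrderLE m f := by
  obtain ⟨m, hm⟩ := (A.pdFin f).bddAbove
  exact ⟨m, fun q hq => by_contra fun hne => absurd (hm hne) (by omega)⟩

theorem exists_orderLE_forall {a : ℕ → V} {N : ℕ} (hdeg : ∀ k, N < k → a k = 0) :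
    ∃ m, ∀ k, A.OrderLE m (a k) := by
  choose M hM using fun k => A.exists_orderLE (a k)
  refine ⟨(Finset.range (N + 1)).sup M, fun k => ?_⟩
  rcases le_or_gt k N with hk | hk
  · exact (hM k).mono (Finset.le_sup (Finset.mem_range.mpr (by omega)))
  · simpa only [hdeg k hk] using orderLE_zero _

theorem exists_order_attained {a : ℕ → V} {N n : ℕ} (hdeg : ∀ k, N < k → a k = 0)
    (hn : ¬ ∀ k, A.OrderLE n (a k)) :
    ∃ m, n < m ∧ (∀ k, A.OrderLE m (a k)) ∧ ∃ k, A.pd m (a k) ≠ 0 := by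
  classical
  have hex := A.exists_orderLE_forall hdeg
  set m := Nat.find hex
  have hnm : n < m := by
    by_contra! h
    exact hn fun k => (Nat.find_spec hex k).mono h
  refine ⟨m, hnm, Nat.find_spec hex, ?_⟩
  obtain ⟨k, q, hq, hne⟩ : ∃ k q, m - 1 < q ∧ A.pd q (a k) ≠ 0 := by
    simpa [OrderLE] using Nat.find_min hex (show m - 1 < m by omega)
  obtain rfl : q = m := by
    by_contra h
    exact hne (Nat.find_spec hex k q (by omega))
  exact ⟨k, hne⟩

theorem total_u (n : ℕ) : A.total (A.u n) = A.u (n + 1) := by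
  rw [A.total_eq, A.dx_u, add_zero,
    finsum_eq_single _ n fun i hi => by rw [A.pd_u, if_neg hi, mul_zero],
    A.pd_u, if_pos rfl, mul_one]

theorem iterate_total_u (n k : ℕ) : (fun x => A.total x)^[k] (A.u n) = A.u (n + k) := by
  induction k with
  | zero => rfl
  | succ k ih => rw [Function.iterate_succ_apply', ih, total_u, Nat.add_assoc]

theorem pd_succ_total (q : ℕ) (f : V) :
    A.pd (q + 1) (A.total f) = A.pd q f + A.total (A.pd (q + 1) f) := by
  classical
  set S := (A.pdFin f).toFinset
  have h₁ : (Function.support fun n => A.u (n + 1) * A.pd n f) ⊆ S := by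
    intro n hn
    simp only [S, Set.Finite.coe_toFinset]
    exact fun h => hn (by simp [h])
  have h₂ : (Function.support fun n => A.u (n + 1) * A.pd n (A.pd (q + 1) f)) ⊆ S := by
    intro n hn
    simp only [S, Set.Finite.coe_toFinset]
    exact fun h => hn (by simp only [A.pd_comm n, h, map_zero, mul_zero])
  rw [A.total_eq, A.total_eq, finsum_eq_sum_of_support_subset _ h₁,
    finsum_eq_sum_of_support_subset _ h₂, map_add, map_sum, A.pd_dx]
  simp only [Derivation.leibniz, smul_eq_mul, A.pd_u, A.pd_comm (q + 1), Nat.add_right_cancel_iff,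
    mul_ite, mul_one, mul_zero, Finset.sum_add_distrib, Finset.sum_ite_eq]
  rw [ite_eq_left_iff.mpr fun hq => by simpa [S, eq_comm] using hq]
  abel

variable {A}

theorem OrderLE.total {m : ℕ} {f : V} (hf : A.OrderLE m f) : A.OrderLE (m + 1) (A.total f) := by
  intro q hq
  obtain ⟨q, rfl⟩ : ∃ p, q = p + 1 := ⟨q - 1, by omega⟩
  rw [pd_succ_total, hf q (by omega), hf (q + 1) (by omega), map_zero, add_zero]

theorem OrderLE.pd_succ_total {m : ℕ} {f : V} (hf : A.OrderLE m f) :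
    A.pd (m + 1) (A.total f) = A.pd m f := by
  rw [DiffAlg.pd_succ_total, hf (m + 1) (by omega), map_zero, add_zero]

variable (A)

/-- Only the terms `∂^k ∘ y` with `k ∈ {X - 1, X}` contribute, each through at most one
derivative of `y`. -/
theorem mulZ_add_sub_one {x y : ℤ → V} {X Y : ℤ} (hx : ∀ k, X < k → x k = 0)
    (hy : ∀ k, Y < k → y k = 0) :
    A.mulZ x y (X + Y - 1) = x (X - 1) * y Y + x X * y (Y - 1) + X • (x X * A.total (y Y)) := by
  have hiter : ∀ (n : ℕ) (j : ℤ), Y < j → (fun x => A.total x)^[n] (y j) = 0 := fun n j hj => by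
    rw [hy j hj]
    exact Function.iterate_fixed (map_zero _) n
  have hsupp : (Function.support fun k : ℤ => ∑ᶠ n : ℕ,
      intChoose k n • (x k * (fun x => A.total x)^[n] (y (X + Y - 1 - k + n))))
      ⊆ (({X - 1, X} : Finset ℤ) : Set ℤ) := by
    intro k hk
    by_contra hne
    simp only [Finset.coe_insert, Finset.coe_singleton, Set.mem_insert_iff,
      Set.mem_singleton_iff, not_or] at hne
    refine hk (finsum_eq_zero_of_forall_eq_zero fun n => ?_)
    rcases lt_or_ge X k with h | h
    · rw [hx k h, zero_mul, smul_zero]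
    · rw [hiter n _ (by omega), mul_zero, smul_zero]
  have hsupp' : (Function.support fun n : ℕ =>
      intChoose X n • (x X * (fun x => A.total x)^[n] (y (X + Y - 1 - X + n))))
      ⊆ (({0, 1} : Finset ℕ) : Set ℕ) := by
    intro n hn
    by_contra hne
    simp only [Finset.coe_insert, Finset.coe_singleton, Set.mem_insert_iff,
      Set.mem_singleton_iff, not_or] at hne
    exact hn (by simp only [hiter n (X + Y - 1 - X + n) (by omega), mul_zero, smul_zero])
  rw [mulZ, finsum_eq_sum_of_support_subset _ hsupp, Finset.sum_pair (by omega),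
    finsum_eq_single _ 0 fun n hn => by rw [hiter n _ (by omega), mul_zero, smul_zero],
    finsum_eq_sum_of_support_subset _ hsupp', Finset.sum_pair (by omega)]
  simp only [intChoose, Finset.range_zero, Finset.prod_empty, Nat.factorial, Finset.range_one,
    Finset.prod_singleton, Nat.cast_one, Int.ediv_one, one_smul, Function.iterate_zero_apply,
    Function.iterate_one, Nat.cast_zero, add_zero, Nat.succ_eq_add_one, zero_add, mul_one, sub_zero]
  ring_nf

variable {A}

theorem evf_zero (F : V) : A.evf F 0 = 0 :=
  finsum_eq_zero_of_forall_eq_zero fun n => by rw [map_zero, mul_zero]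

theorem dafC_eq_zero {a : ℕ → V} {m : ℕ} (ha : ∀ k, A.OrderLE m (a k)) (F : V) {j : ℕ}
    (hj : m < j) : A.dafC a F j = 0 :=
  finsum_eq_zero_of_forall_eq_zero fun k => by rw [ha k j hj, mul_zero]

theorem pd_dafC_u {a : ℕ → V} {N m P : ℕ} (hdeg : ∀ k, N < k → a k = 0)
    (ha : ∀ k, A.OrderLE m (a k)) (hP : m < P) (i j : ℕ) :
    A.pd (P + i) (A.dafC a (A.u P) j) = A.pd j (a i) := by
  classical
  have hsupp : (Function.support fun k => (fun x => A.total x)^[k] (A.u P) * A.pd j (a k))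
      ⊆ (Finset.range (N + 1) : Set ℕ) := by
    intro k hk
    by_contra hkN
    simp only [Finset.coe_range, Set.mem_Iio] at hkN
    exact hk (by simp only [hdeg k (by omega), map_zero, mul_zero])
  rw [dafC, finsum_eq_sum_of_support_subset _ hsupp, map_sum]
  simp only [iterate_total_u, Derivation.leibniz, smul_eq_mul, A.pd_u, A.pd_comm (P + i),
    ha _ (P + i) (by omega), map_zero, mul_zero, zero_add, Nat.add_left_cancel_iff, mul_ite,
    mul_one, Finset.sum_ite_eq, Finset.mem_range]
  exact ite_eq_left_iff.mpr fun hi => by rw [hdeg i (by omega), map_zero]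

/-- `X_{A(F)}(A)` and `A ∘ X_F(A)` have degree `≤ N < m - 1`, so the coefficient of `∂^(N+m-1)`
comes from the commutator `[(D_A)_F, A]` alone. -/
theorem IsHereditary.natCast_mul_eq {a : ℕ → V} {N m : ℕ} (her : A.IsHereditary a)
    (hdeg : ∀ k, N < k → a k = 0) (ha : ∀ k, A.OrderLE m (a k)) (hNm : N + 1 < m) (F : V) :
    (m : V) * (A.dafC a F m * A.total (a N)) = N * (a N * A.total (A.dafC a F m)) := by
  have key := her F (N + m - 1)
  set b := A.dafC a F
  set g := fun j => A.evf F (a j)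
  have hg : ∀ k, N < k → g k = 0 := fun k hk => by simp only [g, hdeg k hk, evf_zero]
  have ha' : ∀ k : ℤ, (N : ℤ) < k → loc a k = 0 := fun k => loc_eq_zero hdeg
  have hb' : ∀ k : ℤ, (m : ℤ) < k → loc b k = 0 :=
    fun k => loc_eq_zero fun j => dafC_eq_zero ha F
  have hg' : ∀ k : ℤ, (N : ℤ) < k → loc g k = 0 := fun k => loc_eq_zero hg
  have hba := A.mulZ_add_sub_one hb' ha'
  rw [add_comm (m : ℤ)] at hba
  rw [loc_eq_zero (fun k hk => by rw [hdeg k hk, evf_zero]) (by omega), hba,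
    A.mulZ_add_sub_one ha' hb',
    A.mulZ_add_sub_one ha' fun k hk => hg' k (by omega),
    hg' m (by omega), hg' (m - 1) (by omega), loc_natCast, loc_natCast] at key
  simp only [zsmul_eq_mul, Int.cast_natCast, mul_zero, map_zero, add_zero] at key
  linear_combination -key

end DiffAlg

/-- if `A = Σ_{k ≤ N} a_k ∂^k` is a hereditary differential operator of
degree `N` over `V`, then the differential order of each coefficient `a_k` is at most
`N + 1`. -/
theorem hereditary_coefficient_order {V : Type} [CommRing V] [Algebra ℂ V] [IsDomain V]
    (A : DiffAlg V) (a : ℕ → V) (N : ℕ)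
    (hlead : a N ≠ 0) (hdeg : ∀ k, N < k → a k = 0)
    (her : DiffAlg.IsHereditary A a) :
    ∀ k m : ℕ, N + 1 < m → A.pd m (a k) = 0 := by
  have : CharZero V := charZero_of_injective_algebraMap (algebraMap ℂ V).injective
  by_contra hN
  obtain ⟨m, hNm, ha, k, hk⟩ := A.exists_order_attained hdeg hN
  have hc : ∀ i, N < i → A.pd m (a i) = 0 := fun i hi => by rw [hdeg i hi, map_zero]
  obtain ⟨j, hj, hj₁⟩ := exists_ne_zero_and_succ_eq_zero hk hc
  have key := her.natCast_mul_eq hdeg ha hNm (A.u (m + 1))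
  set b := A.dafC a (A.u (m + 1)) m
  have hb (i : ℕ) : A.pd (m + 1 + i) b = A.pd m (a i) := DiffAlg.pd_dafC_u hdeg ha (by omega) i m
  rcases Nat.eq_zero_or_pos N with rfl | hNpos
  · obtain rfl : j = 0 := by by_contra h; exact hj (hc j (by omega))
    have hb₀ : b ≠ 0 := fun h => hj (by rw [← hb 0, h, map_zero])
    have ha₀ : A.total (a 0) ≠ 0 := fun h => hj (by rw [← (ha 0).pd_succ_total, h, map_zero])
    have hm : (m : V) ≠ 0 := Nat.cast_ne_zero.mpr (by omega)
    exact mul_ne_zero hm (mul_ne_zero hb₀ ha₀) (by simpa using key)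
  · have hb₁ : A.pd (m + 1 + j + 1) b = 0 := (hb (j + 1)).trans hj₁
    have h := congrArg (A.pd (m + 1 + j + 1)) key
    simp only [Derivation.leibniz, smul_eq_mul, Derivation.map_natCast, hb₁,
      DiffAlg.pd_succ_total, hb, ha N _ (by omega : m < m + 1 + j + 1),
      (ha N).total _ (by omega : m + 1 < m + 1 + j + 1), map_zero, mul_zero, add_zero] at h
    exact mul_ne_zero (Nat.cast_ne_zero.mpr hNpos.ne') (mul_ne_zero hlead hj) h.symm
end

section
/- Every Poisson differential operator H over V is integrable: there exists a skew-symmetric bidifferential operator M (namely M_F = (D_H)_F^*) such that X_{H(F)}(H) − (D_H)_F ∘ H = H ∘ (D_H)_F^* for all F ∈ V. -/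
namespace DiffAlg

variable {V : Type} [CommRing V] [Algebra ℂ V]

/-- Coefficients of the formal adjoint `A* = Σ_m (-∂)^m ∘ a_m` of a differential
operator with coefficients `c`. -/
noncomputable def adjC (A : DiffAlg V) (c : ℕ → V) : ℕ → V := fun j =>
  ∑ᶠ m, if j ≤ m then
    (((-1 : ℤ) ^ m * (m.choose (m - j)) : ℤ)) • (fun x => A.total x)^[m - j] (c m)
  else 0

/-- The adjoint of the differential operator with coefficients `c`, applied to `x`:
`A*(x) = Σ_j (-1)^j ∂^j (c_j x)`. -/
noncomputable def adjApp (A : DiffAlg V) (c : ℕ → V) (x : V) : V :=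
  ∑ᶠ j, ((-1 : ℤ) ^ j) • (fun x => A.total x)^[j] (c j * x)

end DiffAlg

namespace DiffAlg

/-- The Fréchet derivative `D_F` applied to `G`. -/
noncomputable def frechApp {V : Type} [CommRing V] [Algebra ℂ V]
    (A : DiffAlg V) (F G : V) : V :=
  ∑ᶠ m, A.pd m F * (fun x => A.total x)^[m] G

end DiffAlg

/-!
The skew-symmetry of `M_F = (D_H)_F^*` is the case `c = H` of the identity
`((D_c)_F)^* G = ((D_{c^*})_G)^* F`, which holds for every differential operator `c`.

A differential operator is determined by its action on `V` (evaluate it at `u⁽ᴹ⁾` for large `M`),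
so the integrability identity only has to be checked on every `g`. In the Poisson identity for
`(F, g)`, the Leibniz rule expands the two evolutionary derivatives into
`X_{H(F)}(H)(g) + H(D_g(H F))` and `(D_H)_F(H g) + H(D_F(H g))`. The adjoint terms left over
combine into `H((D_H)_F^* g)`, because `D_{H(F)}^* g + D_F^*(H g) = (D_H)_F^* g` for skew-adjoint
`H`, which in turn follows from `D_{∂F}^* = -D_F^* ∘ ∂`.
-/

namespace DiffAlg

open Finset

def VanishesFrom {M : Type*} [Zero M] (c : ℕ → M) (N : ℕ) : Prop := ∀ k, N ≤ k → c k = 0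

namespace VanishesFrom

variable {M : Type*} [Zero M] {c : ℕ → M} {N : ℕ}

lemma mono (hc : VanishesFrom c N) {N' : ℕ} (h : N ≤ N') : VanishesFrom c N' :=
  fun k hk => hc k (h.trans hk)

lemma eq_zero (hc : VanishesFrom c N) {k : ℕ} (hk : N ≤ k) : c k = 0 := hc k hk

lemma of_imp {M' : Type*} [Zero M'] {f : ℕ → M'} (hc : VanishesFrom c N)
    (hf : ∀ k, c k = 0 → f k = 0) : VanishesFrom f N :=
  fun k hk => hf k (hc k hk)

lemma finsum_eq_sum_range {M : Type*} [AddCommMonoid M] {c : ℕ → M} (hc : VanishesFrom c N) :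
    ∑ᶠ k, c k = ∑ k ∈ range N, c k :=
  finsum_eq_sum_of_support_subset c fun k hk => by
    simpa using not_le.1 fun h => hk (hc k h)

lemma add {M : Type*} [AddZeroClass M] {c d : ℕ → M} (hc : VanishesFrom c N)
    (hd : VanishesFrom d N) : VanishesFrom (c + d) N := fun k hk => by
  simp [hc.eq_zero hk, hd.eq_zero hk]

lemma sub {M : Type*} [AddGroup M] {c d : ℕ → M} (hc : VanishesFrom c N)
    (hd : VanishesFrom d N) : VanishesFrom (c - d) N := fun k hk => by
  simp [hc.eq_zero hk, hd.eq_zero hk]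

lemma finset_sum {M ι : Type*} [AddCommMonoid M] {s : Finset ι} {w : ι → ℕ → M}
    (hw : ∀ i ∈ s, VanishesFrom (w i) N) : VanishesFrom (∑ i ∈ s, w i) N := fun k hk => by
  simp [Finset.sum_apply, sum_eq_zero fun i hi => (hw i hi).eq_zero hk]

end VanishesFrom

lemma exists_vanishesFrom_of_finite {M : Type*} [Zero M] {c : ℕ → M}
    (h : (Function.support c).Finite) : ∃ N, VanishesFrom c N := by
  obtain ⟨N, hN⟩ := h.bddAbove
  exact ⟨N + 1, fun k hk => by_contra fun hck => absurd (hN hck) (by omega)⟩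

lemma vanishesFrom_single_zero {M : Type*} [Zero M] (b : M) : VanishesFrom (Pi.single 0 b) 1 :=
  fun k hk => Pi.single_eq_of_ne (M := fun _ => M) (by omega) b

/-- If `c` holds the coefficients of `L = Σ c_k ∂^k`, then `shiftUp c` holds those of `L ∘ ∂`. -/
def shiftUp {M : Type*} [Zero M] (c : ℕ → M) : ℕ → M
  | 0 => 0
  | n + 1 => c n

@[simp] lemma shiftUp_zero {M : Type*} [Zero M] (c : ℕ → M) : shiftUp c 0 = 0 := rfl

@[simp] lemma shiftUp_succ {M : Type*} [Zero M] (c : ℕ → M) (n : ℕ) : shiftUp c (n + 1) = c n :=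
  rfl

lemma VanishesFrom.shiftUp {M : Type*} [Zero M] {c : ℕ → M} {N : ℕ} (hc : VanishesFrom c N) :
    VanishesFrom (shiftUp c) (N + 1) := by
  rintro (_ | k) hk
  · rfl
  · exact hc k (by omega)

section Loc

variable {V : Type} [CommRing V]

@[simp] lemma loc_natCast_s16 (c : ℕ → V) (p : ℕ) : loc c p = c p := by
  simp [loc]

lemma loc_of_neg (c : ℕ → V) {m : ℤ} (hm : m < 0) : loc c m = 0 := if_neg (by omega)

lemma loc_sub (c d : ℕ → V) (m : ℤ) : loc (c - d) m = loc c m - loc d m := by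
  simp only [loc]
  split_ifs <;> simp

lemma sum_range_loc_sub {W : Type*} [AddCommMonoid W] {b : ℕ → V} {Nb : ℕ}
    (hb : VanishesFrom b Nb) (f : V → ℕ → W) (hf : ∀ p, f 0 p = 0) {d P : ℕ} (hP : d + Nb ≤ P) :
    ∑ p ∈ range P, f (loc b ((p : ℤ) - d)) p = ∑ l ∈ range Nb, f (b l) (l + d) := by
  obtain ⟨Q, rfl⟩ := Nat.exists_eq_add_of_le (le_of_add_le_left hP)
  rw [sum_range_add, sum_eq_zero fun p hp => by
      rw [loc_of_neg b (by simp at hp; omega), hf], zero_add]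
  simp only [Nat.cast_add, add_sub_cancel_left, loc_natCast_s16]
  rw [← sum_subset (range_subset_range.2 (show Nb ≤ Q by omega)) (f := fun l => f (b l) (d + l))
    fun l _ hl => by rw [hb.eq_zero (by simpa using hl), hf]]
  exact sum_congr rfl fun l _ => by rw [add_comm]

end Loc

variable {V : Type} [CommRing V] [Algebra ℂ V] (A : DiffAlg V) {a b c d h : ℕ → V} {N Na Nb : ℕ}

lemma exists_vanishesFrom_pd (f : V) : ∃ N, VanishesFrom (fun n => A.pd n f) N :=
  exists_vanishesFrom_of_finite (A.pdFin f)

lemma exists_vanishesFrom_pd_of_lt (N : ℕ) (g : ℕ → V) :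
    ∃ M, ∀ k < N, VanishesFrom (fun n => A.pd n (g k)) M := by
  choose M hM using fun k => A.exists_vanishesFrom_pd (g k)
  exact ⟨(range N).sup M, fun k hk => (hM k).mono (le_sup (mem_range.2 hk))⟩

lemma total_mul (x y : V) : A.total (x * y) = A.total x * y + x * A.total y := by
  rw [Derivation.leibniz, smul_eq_mul, smul_eq_mul, add_comm, mul_comm y]

noncomputable def totalPow (n : ℕ) : Module.End ℂ V := (A.total : V →ₗ[ℂ] V) ^ n

lemma iterate_total (n : ℕ) (x : V) : (fun x => A.total x)^[n] x = A.totalPow n x := by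
  rw [totalPow, Module.End.pow_apply]; rfl

@[simp] lemma totalPow_zero (x : V) : A.totalPow 0 x = x := rfl

lemma totalPow_succ (n : ℕ) (x : V) : A.totalPow (n + 1) x = A.totalPow n (A.total x) := by
  rw [totalPow, pow_succ]; rfl

lemma totalPow_succ' (n : ℕ) (x : V) : A.totalPow (n + 1) x = A.total (A.totalPow n x) := by
  rw [totalPow, pow_succ']; rfl

lemma totalPow_totalPow (m n : ℕ) (x : V) :
    A.totalPow m (A.totalPow n x) = A.totalPow (m + n) x := by
  rw [totalPow, totalPow, totalPow, pow_add]; rfl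

lemma totalPow_mul (n : ℕ) (x y : V) :
    A.totalPow n (x * y) =
      ∑ i ∈ range (n + 1), n.choose i • (A.totalPow i x * A.totalPow (n - i) y) := by
  induction n with
  | zero => simp
  | succ n ih =>
    rw [sum_choose_succ_nsmul (fun i j => A.totalPow i x * A.totalPow j y), totalPow_succ', ih,
      map_sum, add_comm (∑ i ∈ range (n + 1), _), ← sum_add_distrib]
    refine sum_congr rfl fun i hi => ?_
    rw [map_nsmul, total_mul, ← totalPow_succ', ← totalPow_succ', smul_add,
      Nat.sub_add_comm (Nat.lt_succ_iff.1 (mem_range.1 hi)), add_comm]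

lemma totalPow_u (k M : ℕ) : A.totalPow k (A.u M) = A.u (M + k) := by
  induction k with
  | zero => rfl
  | succ k ih =>
    rw [totalPow_succ', ih, A.total_eq, A.dx_u, add_zero,
      finsum_eq_single _ (M + k) fun n hn => by simp [A.pd_u, hn]]
    simp [A.pd_u, add_assoc]

lemma pd_total (n : ℕ) (f : V) :
    A.pd n (A.total f) = A.total (A.pd n f) + shiftUp (fun m => A.pd m f) n := by
  obtain ⟨N, hN⟩ := A.exists_vanishesFrom_pd f
  have hterm : ∀ j, A.pd n (A.u (j + 1) * A.pd j f)
      = A.u (j + 1) * A.pd j (A.pd n f) + if n = j + 1 then A.pd j f else 0 := fun j => by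
    rw [Derivation.leibniz, A.pd_u, A.pd_comm]
    split_ifs <;> simp [add_comm]
  rw [A.total_eq, A.total_eq, (hN.of_imp fun j hj => by simp [hj]).finsum_eq_sum_range,
    (hN.of_imp fun j hj => by simp [A.pd_comm j n, hj]).finsum_eq_sum_range, map_add, map_sum,
    A.pd_dx, sum_congr rfl fun j _ => hterm j, sum_add_distrib]
  rcases n with _ | m
  · simp
  · simp only [Nat.add_right_cancel_iff, sum_ite_eq, mem_range, shiftUp_succ]
    split_ifs with hm
    · abel
    · rw [hN.eq_zero (not_lt.1 hm)]; abel

noncomputable def evfDerivation (K : V) : Derivation ℂ V V :=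
  have hfin : ∀ x, (fun n => (fun x => A.total x)^[n] K * A.pd n x).HasFiniteSupport :=
    fun x => .fun_mul_right _ (A.pdFin x)
  Derivation.mk'
    { toFun := A.evf K
      map_add' := fun x y => by
        simp only [evf, map_add, mul_add]
        exact finsum_add_distrib (hfin x) (hfin y)
      map_smul' := fun c x => by
        rw [RingHom.id_apply, evf, evf, smul_finsum' c (hfin x)]
        exact finsum_congr fun n => by rw [Derivation.map_smul, mul_smul_comm] }
    fun x y => by
      simp only [LinearMap.coe_mk, AddHom.coe_mk, evf, smul_eq_mul]
      rw [mul_finsum' _ _ (hfin y), mul_finsum' _ _ (hfin x),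
        ← finsum_add_distrib (.fun_mul_right _ (hfin y)) (.fun_mul_right _ (hfin x))]
      exact finsum_congr fun n => by rw [Derivation.leibniz, smul_eq_mul, smul_eq_mul]; ring

@[simp] lemma evfDerivation_apply (K f : V) : A.evfDerivation K f = A.evf K f := rfl

lemma evf_eq_sum {f : V} {N : ℕ} (hf : VanishesFrom (fun n => A.pd n f) N) (K : V) :
    A.evf K f = ∑ n ∈ range N, A.totalPow n K * A.pd n f := by
  rw [evf, (hf.of_imp fun n hn => by simp [hn]).finsum_eq_sum_range]
  simp only [iterate_total]

lemma evf_total (K f : V) : A.evf K (A.total f) = A.total (A.evf K f) := by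
  obtain ⟨N, hN⟩ := A.exists_vanishesFrom_pd f
  have hN' : VanishesFrom (fun n => A.pd n (A.total f)) (N + 1) := by
    intro k hk
    beta_reduce
    rw [pd_total, hN.eq_zero (by omega), hN.shiftUp.eq_zero hk, map_zero, add_zero]
  rw [evf_eq_sum A hN', evf_eq_sum A hN, map_sum]
  simp only [pd_total, mul_add, sum_add_distrib, total_mul, ← totalPow_succ']
  rw [sum_range_succ, sum_range_succ', hN.eq_zero le_rfl]
  simp [add_comm]

lemma evf_totalPow (K : V) (k : ℕ) (f : V) :
    A.evf K (A.totalPow k f) = A.totalPow k (A.evf K f) := by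
  induction k generalizing f with
  | zero => rfl
  | succ k ih => rw [totalPow_succ, ih, totalPow_succ, evf_total]

lemma opApp_eq_sum (hc : VanishesFrom c N) (g : V) :
    A.opApp c g = ∑ k ∈ range N, c k * A.totalPow k g := by
  rw [opApp, (hc.of_imp fun k hk => by simp [hk]).finsum_eq_sum_range]
  simp only [iterate_total]

lemma adjApp_eq_sum (hc : VanishesFrom c N) (x : V) :
    A.adjApp c x = ∑ j ∈ range N, (-1 : ℤ) ^ j • A.totalPow j (c j * x) := by
  rw [adjApp, (hc.of_imp fun k hk => by simp [hk]).finsum_eq_sum_range]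
  simp only [iterate_total]

lemma dafC_eq_sum (hc : VanishesFrom c N) (F : V) (j : ℕ) :
    A.dafC c F j = ∑ k ∈ range N, A.totalPow k F * A.pd j (c k) := by
  rw [dafC, (hc.of_imp fun k hk => by simp [hk]).finsum_eq_sum_range]
  simp only [iterate_total]

lemma adjC_eq_sum (hc : VanishesFrom c N) (j : ℕ) :
    A.adjC c j = ∑ m ∈ range N,
      if j ≤ m then ((-1 : ℤ) ^ m * m.choose (m - j)) • A.totalPow (m - j) (c m) else 0 := by
  rw [adjC, (hc.of_imp fun k hk => by simp [hk]).finsum_eq_sum_range]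
  simp only [iterate_total]

lemma vanishesFrom_dafC (hc : VanishesFrom c N) {M : ℕ}
    (hM : ∀ k < N, VanishesFrom (fun n => A.pd n (c k)) M) (F : V) :
    VanishesFrom (A.dafC c F) M := fun j hj => by
  rw [dafC_eq_sum A hc]
  exact sum_eq_zero fun k hk => by rw [(hM k (mem_range.1 hk)).eq_zero hj, mul_zero]

lemma exists_vanishesFrom_dafC (hc : VanishesFrom c N) (F : V) :
    ∃ M, VanishesFrom (A.dafC c F) M :=
  let ⟨M, hM⟩ := A.exists_vanishesFrom_pd_of_lt N c
  ⟨M, A.vanishesFrom_dafC hc hM F⟩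

variable {A} in
lemma VanishesFrom.adjC (hc : VanishesFrom c N) : VanishesFrom (A.adjC c) N := fun j hj => by
  rw [adjC_eq_sum A hc]
  exact sum_eq_zero fun m hm => if_neg (by simp at hm; omega)

lemma opApp_adjC (hc : VanishesFrom c N) (x : V) : A.opApp (A.adjC c) x = A.adjApp c x := by
  rw [opApp_eq_sum A hc.adjC, adjApp_eq_sum A hc]
  simp only [adjC_eq_sum A hc, sum_mul, ite_mul, zero_mul, smul_mul_assoc]
  rw [sum_comm]
  refine sum_congr rfl fun m hm => ?_
  rw [← sum_subset (range_subset_range.2 (mem_range.1 hm))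
    fun l _ hl => if_neg (by simpa [Nat.lt_succ_iff] using hl), totalPow_mul, smul_sum,
    ← sum_range_reflect]
  refine sum_congr rfl fun l hl => ?_
  have hlm : l ≤ m := Nat.lt_succ_iff.1 (mem_range.1 hl)
  rw [Nat.succ_sub_one, if_pos (Nat.sub_le m l), Nat.sub_sub_self hlm, mul_smul, natCast_zsmul]

lemma pd_opApp_u (hc : VanishesFrom c N) {M : ℕ}
    (hM : ∀ k < N, VanishesFrom (fun n => A.pd n (c k)) M) (j : ℕ) :
    A.pd (M + j) (A.opApp c (A.u M)) = c j := by
  have hterm : ∀ k ∈ range N,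
      A.pd (M + j) (c k * A.totalPow k (A.u M)) = if j = k then c k else 0 := fun k hk => by
      rw [totalPow_u, Derivation.leibniz, A.pd_u, (hM k (mem_range.1 hk)).eq_zero (by omega)]
      simp [Nat.add_left_cancel_iff]
  rw [opApp_eq_sum A hc, map_sum, sum_congr rfl hterm, sum_ite_eq]
  split_ifs with hj
  · rfl
  · exact (hc.eq_zero (by simpa using hj)).symm

lemma eq_of_opApp_eq (hc : VanishesFrom c N) (hd : VanishesFrom d N)
    (h : ∀ g, A.opApp c g = A.opApp d g) : c = d := by
  obtain ⟨M, hM⟩ := A.exists_vanishesFrom_pd_of_lt N c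
  obtain ⟨M', hM'⟩ := A.exists_vanishesFrom_pd_of_lt N d
  funext j
  rw [← A.pd_opApp_u hc (fun k hk => (hM k hk).mono (le_max_left M M')) j, h,
    A.pd_opApp_u hd (fun k hk => (hM' k hk).mono (le_max_right M M')) j]

lemma opApp_add_right (hc : VanishesFrom c N) (x y : V) :
    A.opApp c (x + y) = A.opApp c x + A.opApp c y := by
  simp only [opApp_eq_sum A hc, map_add, mul_add, sum_add_distrib]

lemma opApp_sub_right (hc : VanishesFrom c N) (x y : V) :
    A.opApp c (x - y) = A.opApp c x - A.opApp c y := by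
  simp only [opApp_eq_sum A hc, map_sub, mul_sub, sum_sub_distrib]

lemma adjApp_neg_right (hc : VanishesFrom c N) (x : V) : A.adjApp c (-x) = -A.adjApp c x := by
  simp only [adjApp_eq_sum A hc, mul_neg, map_neg, smul_neg, sum_neg_distrib]

lemma adjApp_sum_right (hc : VanishesFrom c N) {ι : Type*} (s : Finset ι) (x : ι → V) :
    A.adjApp c (∑ i ∈ s, x i) = ∑ i ∈ s, A.adjApp c (x i) := by
  simp only [adjApp_eq_sum A hc, mul_sum, map_sum, smul_sum]
  exact sum_comm

lemma opApp_sub_left (hc : VanishesFrom c N) (hd : VanishesFrom d N)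
    (g : V) : A.opApp (c - d) g = A.opApp c g - A.opApp d g := by
  rw [opApp_eq_sum A hc, opApp_eq_sum A hd, opApp_eq_sum A (hc.sub hd), ← sum_sub_distrib]
  simp only [Pi.sub_apply, sub_mul]

lemma adjApp_add_left (hc : VanishesFrom c N) (hd : VanishesFrom d N)
    (x : V) : A.adjApp (c + d) x = A.adjApp c x + A.adjApp d x := by
  rw [adjApp_eq_sum A hc, adjApp_eq_sum A hd, adjApp_eq_sum A (hc.add hd), ← sum_add_distrib]
  simp only [Pi.add_apply, add_mul, map_add, smul_add]

lemma adjApp_sub_left (hc : VanishesFrom c N) (hd : VanishesFrom d N)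
    (x : V) : A.adjApp (c - d) x = A.adjApp c x - A.adjApp d x := by
  rw [adjApp_eq_sum A hc, adjApp_eq_sum A hd, adjApp_eq_sum A (hc.sub hd), ← sum_sub_distrib]
  simp only [Pi.sub_apply, sub_mul, map_sub, smul_sub]

lemma dafC_sub_left (hc : VanishesFrom c N) (hd : VanishesFrom d N)
    (F : V) (j : ℕ) : A.dafC (c - d) F j = A.dafC c F j - A.dafC d F j := by
  rw [dafC_eq_sum A hc, dafC_eq_sum A hd, dafC_eq_sum A (hc.sub hd), ← sum_sub_distrib]
  simp only [Pi.sub_apply, map_sub, mul_sub]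

lemma adjApp_sum_left {ι : Type*} (s : Finset ι) {w : ι → ℕ → V}
    (hw : ∀ i ∈ s, VanishesFrom (w i) N) (x : V) :
    A.adjApp (∑ i ∈ s, w i) x = ∑ i ∈ s, A.adjApp (w i) x := by
  rw [adjApp_eq_sum A (VanishesFrom.finset_sum hw),
    sum_congr rfl fun i hi => adjApp_eq_sum A (hw i hi) x, sum_comm]
  simp only [Finset.sum_apply, sum_mul, map_sum, smul_sum]

/-- If `c` holds the coefficients of `L = Σ c_k ∂^k`, then `totalComp c` holds those of `∂ ∘ L`. -/
def totalComp (c : ℕ → V) : ℕ → V := fun n => A.total (c n) + shiftUp c n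

variable {A} in
lemma VanishesFrom.totalComp (hc : VanishesFrom c N) :
    VanishesFrom (A.totalComp c) (N + 1) := fun k hk => by
  simp [DiffAlg.totalComp, hc.eq_zero (by omega : N ≤ k), hc.shiftUp.eq_zero hk]

lemma opApp_totalComp (hc : VanishesFrom c N) (x : V) :
    A.opApp (A.totalComp c) x = A.total (A.opApp c x) := by
  rw [opApp_eq_sum A hc.totalComp, opApp_eq_sum A hc, map_sum]
  simp only [totalComp, add_mul, sum_add_distrib, total_mul, ← totalPow_succ']
  rw [sum_range_succ, sum_range_succ' (fun k => shiftUp c k * _), hc.eq_zero le_rfl]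
  simp [add_comm]

lemma adjApp_totalComp (hc : VanishesFrom c N) (y : V) :
    A.adjApp (A.totalComp c) y = -A.adjApp c (A.total y) := by
  rw [adjApp_eq_sum A hc.totalComp, adjApp_eq_sum A hc]
  simp only [totalComp, add_mul, map_add, smul_add, sum_add_distrib]
  rw [sum_range_succ, sum_range_succ' (fun j => (-1 : ℤ) ^ j • A.totalPow j (shiftUp c j * y)),
    hc.eq_zero le_rfl, ← sum_neg_distrib]
  simp only [shiftUp_succ, shiftUp_zero, totalPow_succ, total_mul, map_add, pow_succ, mul_neg_one,
    neg_smul, smul_add, map_zero, zero_mul, smul_zero, add_zero, sum_add_distrib, sum_neg_distrib]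
  abel

lemma dafC_totalComp (hc : VanishesFrom c N) (G : V) (j : ℕ) :
    A.dafC (A.totalComp c) G j = A.totalComp (A.dafC c G) j := by
  rw [dafC_eq_sum A hc.totalComp, totalComp, dafC_eq_sum A hc, map_sum]
  simp only [totalComp, map_add, pd_total, mul_add, sum_add_distrib, total_mul, ← totalPow_succ']
  rw [sum_range_succ' (fun k => A.totalPow k G * A.pd j (shiftUp c k)), sum_range_succ,
    sum_range_succ, hc.eq_zero le_rfl]
  rcases j with _ | j
  · simp [add_comm]
  · simp [dafC_eq_sum A hc]
    abel

lemma opApp_single_zero (b x : V) : A.opApp (Pi.single 0 b) x = b * x := by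
  rw [opApp_eq_sum A (vanishesFrom_single_zero b)]
  simp

lemma dafC_single_zero (b G : V) (j : ℕ) : A.dafC (Pi.single 0 b) G j = G * A.pd j b := by
  rw [dafC_eq_sum A (vanishesFrom_single_zero b)]
  simp

lemma adjApp_eq_tail (hc : VanishesFrom c (N + 1)) (x : V) :
    A.adjApp c x = c 0 * x - A.total (A.adjApp (fun k => c (k + 1)) x) := by
  rw [adjApp_eq_sum A hc, sum_range_succ',
    adjApp_eq_sum A (N := N) fun k hk => hc.eq_zero (by omega), map_sum]
  simp only [totalPow_succ', map_zsmul, pow_succ, mul_neg_one, neg_smul, sum_neg_distrib]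
  simp [sub_eq_add_neg, add_comm]

lemma dafC_eq_tail (hc : VanishesFrom c (N + 1)) (F : V) (j : ℕ) :
    A.dafC c F j = F * A.pd j (c 0) + A.dafC (fun k => c (k + 1)) (A.total F) j := by
  rw [dafC_eq_sum A hc, sum_range_succ',
    dafC_eq_sum A (N := N) (fun k hk => hc.eq_zero (by omega)), add_comm]
  simp [totalPow_succ]

/-- `(c₀ + L ∘ ∂)^* = c₀ - ∂ ∘ L^*`. -/
lemma adjC_eq_tail (hc : VanishesFrom c (N + 1)) :
    A.adjC c = Pi.single 0 (c 0) - A.totalComp (A.adjC fun k => c (k + 1)) := by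
  have ht : VanishesFrom (fun k => c (k + 1)) N := fun k hk => hc.eq_zero (by omega)
  have hs := (vanishesFrom_single_zero (c 0)).mono (Nat.le_add_left 1 N)
  refine A.eq_of_opApp_eq hc.adjC (fun k hk => ?_) fun g => ?_
  · exact (hs.sub ht.adjC.totalComp).eq_zero hk
  · rw [opApp_sub_left A hs ht.adjC.totalComp, opApp_single_zero, opApp_totalComp A ht.adjC,
      opApp_adjC A hc, opApp_adjC A ht, adjApp_eq_tail A hc]

/-- Writing `c = c₀ + L ∘ ∂`, both sides reduce to the same expressions for `c₀` and for `L`,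
the latter with `F` replaced by `∂F`. -/
theorem adjApp_dafC_adjC (hc : VanishesFrom c N) (F G : V) :
    A.adjApp (A.dafC c F) G = A.adjApp (A.dafC (A.adjC c) G) F := by
  induction N generalizing c F G with
  | zero =>
    have hc₀ : ∀ {c : ℕ → V}, VanishesFrom c 0 → ∀ F, VanishesFrom (A.dafC c F) 0 :=
      fun hc F => A.vanishesFrom_dafC hc (fun k hk => absurd hk k.not_lt_zero) F
    rw [adjApp_eq_sum A (hc₀ hc F), adjApp_eq_sum A (hc₀ hc.adjC G), sum_range_zero, sum_range_zero]
  | succ N ih =>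
    set t : ℕ → V := fun k => c (k + 1)
    have ht : VanishesFrom t N := fun k hk => hc.eq_zero (by omega)
    have hta : VanishesFrom (A.adjC t) N := ht.adjC
    obtain ⟨M₀, hM₀⟩ := A.exists_vanishesFrom_pd (c 0)
    obtain ⟨M₁, hM₁⟩ := A.exists_vanishesFrom_dafC ht (A.total F)
    obtain ⟨M₂, hM₂⟩ := A.exists_vanishesFrom_dafC hta G
    have hpd : ∀ x : V, VanishesFrom (fun j => x * A.pd j (c 0)) (M₀ + M₁ + M₂ + 1) := fun x =>
      (hM₀.mono (by omega)).of_imp fun j hj => by rw [hj, mul_zero]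
    have hL : A.dafC c F = (fun j => F * A.pd j (c 0)) + A.dafC t (A.total F) :=
      funext (A.dafC_eq_tail hc F)
    have hR : A.dafC (A.adjC c) G
        = (fun j => G * A.pd j (c 0)) - A.totalComp (A.dafC (A.adjC t) G) := by
      funext j
      rw [adjC_eq_tail A hc, dafC_sub_left A (vanishesFrom_single_zero (c 0) |>.mono
        (Nat.le_add_left 1 N)) hta.totalComp, dafC_single_zero, dafC_totalComp A hta]
      rfl
    have hcomm : A.adjApp (fun j => F * A.pd j (c 0)) G = A.adjApp (fun j => G * A.pd j (c 0)) F :=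
      finsum_congr fun j => by beta_reduce; congr 2; ring
    rw [hL, hR, adjApp_add_left A (hpd F) (hM₁.mono (by omega)), ih ht,
      adjApp_sub_left A (hpd G) (hM₂.totalComp.mono (by omega)), adjApp_totalComp A hM₂, hcomm,
      sub_neg_eq_add]

lemma adjApp_pd_totalPow (k : ℕ) (F y : V) :
    A.adjApp (fun m => A.pd m (A.totalPow k F)) y
      = A.adjApp (fun m => A.pd m F) ((-1 : ℤ) ^ k • A.totalPow k y) := by
  induction k generalizing y with
  | zero => simp
  | succ k ih =>
    obtain ⟨N, hN⟩ := A.exists_vanishesFrom_pd (A.totalPow k F)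
    obtain ⟨N', hN'⟩ := A.exists_vanishesFrom_pd F
    have hpd : (fun m => A.pd m (A.totalPow (k + 1) F))
        = A.totalComp fun m => A.pd m (A.totalPow k F) :=
      funext fun m => by rw [totalPow_succ', pd_total]; rfl
    rw [hpd, adjApp_totalComp A hN, ih, ← adjApp_neg_right A hN', totalPow_succ, pow_succ,
      mul_neg_one, neg_smul]

lemma adjApp_self_of_adjC_eq_neg (hh : VanishesFrom h N) (hskew : ∀ j, A.adjC h j = -h j)
    (g : V) : A.adjApp h g = -A.opApp h g := by
  rw [← opApp_adjC A hh, opApp_eq_sum A hh.adjC, opApp_eq_sum A hh, ← sum_neg_distrib]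
  simp [hskew]

lemma adjApp_pd_opApp (hh : VanishesFrom h N) (hskew : ∀ j, A.adjC h j = -h j) (F g : V) :
    A.adjApp (fun m => A.pd m (A.opApp h F)) g + A.adjApp (fun m => A.pd m F) (A.opApp h g)
      = A.adjApp (A.dafC h F) g := by
  obtain ⟨M₀, hM₀⟩ := A.exists_vanishesFrom_pd_of_lt N fun k => A.totalPow k F
  obtain ⟨M₁, hM₁⟩ := A.exists_vanishesFrom_dafC hh F
  obtain ⟨M₂, hM₂⟩ := A.exists_vanishesFrom_pd F
  have hw : ∀ k ∈ range N, VanishesFrom (fun m => h k * A.pd m (A.totalPow k F)) M₀ :=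
    fun k hk => (hM₀ k (mem_range.1 hk)).of_imp fun m hm => by rw [hm, mul_zero]
  have hsplit : (fun m => A.pd m (A.opApp h F))
      = A.dafC h F + ∑ k ∈ range N, fun m => h k * A.pd m (A.totalPow k F) := by
    funext m
    rw [opApp_eq_sum A hh, map_sum, Pi.add_apply, dafC_eq_sum A hh, Finset.sum_apply,
      ← sum_add_distrib]
    exact sum_congr rfl fun k _ => by rw [Derivation.leibniz, smul_eq_mul, smul_eq_mul]; ring
  have hterm : ∀ k, A.adjApp (fun m => h k * A.pd m (A.totalPow k F)) g
      = A.adjApp (fun m => A.pd m F) ((-1 : ℤ) ^ k • A.totalPow k (h k * g)) := fun k => by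
    rw [← adjApp_pd_totalPow]
    exact finsum_congr fun j => by beta_reduce; congr 2; ring
  rw [hsplit, adjApp_add_left A (hM₁.mono (le_max_left M₁ M₀))
      (VanishesFrom.finset_sum fun k hk => (hw k hk).mono (le_max_right M₁ M₀)),
    adjApp_sum_left A _ hw, sum_congr rfl fun k _ => hterm k, ← adjApp_sum_right A hM₂,
    ← adjApp_eq_sum A hh, adjApp_self_of_adjC_eq_neg A hh hskew, adjApp_neg_right A hM₂]
  abel

variable {A} in
lemma VanishesFrom.evf (hc : VanishesFrom c N) (K : V) :
    VanishesFrom (fun k => A.evf K (c k)) N :=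
  hc.of_imp fun k hk => by rw [hk, ← evfDerivation_apply, map_zero]

lemma opApp_evf (hc : VanishesFrom c N) (K g : V) :
    A.evf K (A.opApp c g) = A.opApp (fun k => A.evf K (c k)) g + A.opApp c (A.evf K g) := by
  rw [opApp_eq_sum A hc, opApp_eq_sum A (hc.evf K), opApp_eq_sum A hc, ← sum_add_distrib,
    ← evfDerivation_apply, map_sum]
  refine sum_congr rfl fun k _ => ?_
  rw [Derivation.leibniz, smul_eq_mul, smul_eq_mul, evfDerivation_apply, evfDerivation_apply,
    evf_totalPow]
  ring

lemma opApp_evf_eq_opApp_dafC (hc : VanishesFrom c N) (K F : V) :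
    A.opApp (fun k => A.evf K (c k)) F = A.opApp (A.dafC c F) K := by
  obtain ⟨M, hM⟩ := A.exists_vanishesFrom_pd_of_lt N c
  rw [opApp_eq_sum A (hc.evf K), opApp_eq_sum A (A.vanishesFrom_dafC hc hM F)]
  simp only [dafC_eq_sum A hc, sum_mul]
  rw [sum_congr rfl fun k hk => by rw [evf_eq_sum A (hM k (mem_range.1 hk)), sum_mul], sum_comm]
  exact sum_congr rfl fun j _ => sum_congr rfl fun k _ => by ring

lemma evf_eq_frechApp (K f : V) : A.evf K f = A.frechApp f K :=
  finsum_congr fun _ => mul_comm _ _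

lemma _root_.intChoose_natCast (κ n : ℕ) : intChoose κ n = κ.choose n := by
  rw [intChoose, ← descPochhammer_eval_eq_prod_range, descPochhammer_eval_eq_descFactorial,
    Nat.descFactorial_eq_factorial_mul_choose, Nat.cast_mul,
    Int.mul_ediv_cancel_left _ (by positivity)]

lemma mulZ_loc_eq_sum (ha : VanishesFrom a Na) (b : ℕ → V) (m : ℤ) :
    A.mulZ (loc a) (loc b) m = ∑ κ ∈ range Na, ∑ n ∈ range (κ + 1),
      κ.choose n • (a κ * A.totalPow n (loc b (m - κ + n))) := by
  have hsupp : Function.support (fun k : ℤ => ∑ᶠ n : ℕ,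
      intChoose k n • (loc a k * (fun x => A.total x)^[n] (loc b (m - k + n))))
      ⊆ ((range Na).map Nat.castEmbedding : Finset ℤ) := by
    intro k hk
    by_contra hk'
    have hak : loc a k = 0 := by
      rw [loc]
      split_ifs with h0
      · refine ha.eq_zero (not_lt.1 fun hlt => hk' ?_)
        simpa using ⟨k.toNat, hlt, by omega⟩
      · rfl
    exact hk (finsum_eq_zero_of_forall_eq_zero fun n => by rw [hak, zero_mul, smul_zero])
  rw [mulZ, finsum_eq_sum_of_support_subset _ hsupp, sum_map]
  refine sum_congr rfl fun κ _ => ?_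
  rw [Nat.castEmbedding_apply, (VanishesFrom.finsum_eq_sum_range (N := κ + 1) fun n hn => by
    rw [intChoose_natCast, Nat.choose_eq_zero_of_lt (by omega), Nat.cast_zero, zero_smul])]
  simp [intChoose_natCast, iterate_total]

noncomputable def opComp (a b : ℕ → V) : ℕ → V := fun p => A.mulZ (loc a) (loc b) p

lemma mulZ_loc_loc (ha : VanishesFrom a Na) (b : ℕ → V) :
    A.mulZ (loc a) (loc b) = loc (A.opComp a b) := by
  funext m
  rcases lt_or_ge m 0 with hm | hm
  · rw [loc_of_neg _ hm, mulZ_loc_eq_sum A ha]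
    exact sum_eq_zero fun κ _ => sum_eq_zero fun n hn => by
      rw [loc_of_neg b (by simp at hn; omega), map_zero, mul_zero, smul_zero]
  · obtain ⟨p, rfl⟩ := Int.eq_ofNat_of_zero_le hm
    rw [loc_natCast_s16]
    rfl

variable {A} in
lemma VanishesFrom.opComp (ha : VanishesFrom a Na) (hb : VanishesFrom b Nb) :
    VanishesFrom (A.opComp a b) (Na + Nb) := fun p hp => by
  rw [DiffAlg.opComp, mulZ_loc_eq_sum A ha]
  refine sum_eq_zero fun κ hκ => sum_eq_zero fun n hn => ?_
  simp only [mem_range] at hκ hn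
  rw [show (p : ℤ) - κ + n = ((p - κ + n : ℕ) : ℤ) by omega, loc_natCast_s16, hb.eq_zero (by omega),
    map_zero, mul_zero, smul_zero]

lemma opApp_opComp (ha : VanishesFrom a Na) (hb : VanishesFrom b Nb) (g : V) :
    A.opApp (A.opComp a b) g = A.opApp a (A.opApp b g) := by
  rw [opApp_eq_sum A (ha.opComp hb), opApp_eq_sum A ha, opApp_eq_sum A hb]
  simp only [opComp, mulZ_loc_eq_sum A ha, sum_mul, map_sum, mul_sum, totalPow_mul, smul_mul_assoc]
  rw [sum_comm]
  refine sum_congr rfl fun κ hκ => ?_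
  rw [sum_comm, sum_comm (s := range Nb)]
  refine sum_congr rfl fun n hn => ?_
  have hnκ : n ≤ κ := Nat.lt_succ_iff.1 (mem_range.1 hn)
  have hidx : ∀ p : ℕ, (p : ℤ) - κ + n = (p : ℤ) - (κ - n : ℕ) := fun p => by push_cast [hnκ]; ring
  simp only [hidx]
  rw [sum_range_loc_sub hb (fun x p => κ.choose n • (a κ * A.totalPow n x * A.totalPow p g))
    (fun p => by simp) (by simp at hκ; omega)]
  exact sum_congr rfl fun l _ => by rw [totalPow_totalPow, mul_smul_comm, mul_assoc, add_comm l]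

lemma adjApp_dafC_antisymm (hh : VanishesFrom h N) (hskew : ∀ j, A.adjC h j = -h j) (F G : V) :
    A.adjApp (A.dafC h F) G = -A.adjApp (A.dafC h G) F := by
  rw [adjApp_dafC_adjC A hh, adjApp, adjApp, ← finsum_neg_distrib]
  refine finsum_congr fun j => ?_
  simp only [dafC, hskew, map_neg, mul_neg, finsum_neg_distrib, neg_mul, iterate_total, smul_neg]

lemma opApp_adjApp_dafC (hh : VanishesFrom h N) (hskew : ∀ j, A.adjC h j = -h j) (F g : V)
    (hpoisson : A.opApp h (A.frechApp g (A.opApp h F)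
        + A.adjApp (fun m => A.pd m (A.opApp h F)) g
        - A.frechApp F (A.opApp h g) + A.adjApp (fun m => A.pd m F) (A.opApp h g))
      = A.evf (A.opApp h F) (A.opApp h g) - A.evf (A.opApp h g) (A.opApp h F)) :
    A.opApp h (A.adjApp (A.dafC h F) g)
      = A.opApp (fun j => A.evf (A.opApp h F) (h j)) g - A.opApp (A.dafC h F) (A.opApp h g) := by
  rw [opApp_evf A hh, opApp_evf A hh, opApp_evf_eq_opApp_dafC A hh (A.opApp h g) F, evf_eq_frechApp,
    evf_eq_frechApp, opApp_add_right A hh, opApp_sub_right A hh, opApp_add_right A hh] at hpoisson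
  rw [← adjApp_pd_opApp A hh hskew F g, opApp_add_right A hh]
  linear_combination hpoisson

lemma evf_sub_opComp_dafC (hh : VanishesFrom h N) (hskew : ∀ j, A.adjC h j = -h j) (F : V)
    (hpoisson : ∀ g, A.opApp h (A.frechApp g (A.opApp h F)
        + A.adjApp (fun m => A.pd m (A.opApp h F)) g
        - A.frechApp F (A.opApp h g) + A.adjApp (fun m => A.pd m F) (A.opApp h g))
      = A.evf (A.opApp h F) (A.opApp h g) - A.evf (A.opApp h g) (A.opApp h F)) :
    (fun j => A.evf (A.opApp h F) (h j)) - A.opComp (A.dafC h F) h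
      = A.opComp h (A.adjC (A.dafC h F)) := by
  obtain ⟨M, hM⟩ := A.exists_vanishesFrom_dafC hh F
  have hE : VanishesFrom (fun j => A.evf (A.opApp h F) (h j)) (M + N) :=
    (hh.evf _).mono (Nat.le_add_left N M)
  refine A.eq_of_opApp_eq (hE.sub (hM.opComp hh)) ((hh.opComp hM.adjC).mono (by omega)) fun g => ?_
  rw [opApp_sub_left A hE (hM.opComp hh), opApp_opComp A hM hh, opApp_opComp A hh hM.adjC,
    opApp_adjC A hM, opApp_adjApp_dafC A hh hskew F g (hpoisson g)]

end DiffAlg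

/-- every Poisson differential operator `H` over `V` (skew-adjoint and
satisfying the Poisson identity) is integrable: the skew-symmetric bidifferential
operator `M` with `M_F = (D_H)_F^*` satisfies
`X_{H(F)}(H) - (D_H)_F ∘ H = H ∘ (D_H)_F^*` for all `F ∈ V`. -/
theorem poisson_is_integrable {V : Type} [CommRing V] [Algebra ℂ V]
    (A : DiffAlg V) (h : ℕ → V) (hfin : Set.Finite (Function.support h))
    (hskew : ∀ j, DiffAlg.adjC A h j = - h j)
    (hpoisson : ∀ F G : V,
      DiffAlg.opApp A h
        (DiffAlg.frechApp A G (DiffAlg.opApp A h F)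
          + DiffAlg.adjApp A (fun m => A.pd m (DiffAlg.opApp A h F)) G
          - DiffAlg.frechApp A F (DiffAlg.opApp A h G)
          + DiffAlg.adjApp A (fun m => A.pd m F) (DiffAlg.opApp A h G))
      = DiffAlg.evf A (DiffAlg.opApp A h F) (DiffAlg.opApp A h G)
        - DiffAlg.evf A (DiffAlg.opApp A h G) (DiffAlg.opApp A h F)) :
    (∀ F G : V, DiffAlg.adjApp A (DiffAlg.dafC A h F) G
      = - DiffAlg.adjApp A (DiffAlg.dafC A h G) F) ∧
    (∀ F : V, ∀ m : ℤ,
      DiffAlg.loc (fun j => DiffAlg.evf A (DiffAlg.opApp A h F) (h j)) m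
        - DiffAlg.mulZ A (DiffAlg.loc (DiffAlg.dafC A h F)) (DiffAlg.loc h) m
      = DiffAlg.mulZ A (DiffAlg.loc h)
          (DiffAlg.loc (DiffAlg.adjC A (DiffAlg.dafC A h F))) m) := by
  obtain ⟨N, hN⟩ := DiffAlg.exists_vanishesFrom_of_finite hfin
  refine ⟨A.adjApp_dafC_antisymm hN hskew, fun F m => ?_⟩
  obtain ⟨M, hM⟩ := A.exists_vanishesFrom_dafC hN F
  rw [DiffAlg.mulZ_loc_loc A hM, DiffAlg.mulZ_loc_loc A hN, ← DiffAlg.loc_sub,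
    A.evf_sub_opComp_dafC hN hskew F (hpoisson F)]
end
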